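/- Let Σ and Ψ be n×n positive semidefinite real matrices such that Σ ⪰ Ψ and Ψ⁺ ⪰ Σ⁺. Then the column space (image) of Σ equals the column space of Ψ, i.e., Im(Σ^{1/2}) = Im(Ψ^{1/2}). -/

import Mathlib

/-!
`Ψ ≤ Σ` in the Loewner order forces `ker Σ ⊆ ker Ψ`, which for symmetric matrices means
`Im Ψ ⊆ Im Σ`; in the same way `Σ⁺ ≤ Ψ⁺` gives `Im Σ⁺ ⊆ Im Ψ⁺`. The Moore–Penrose inverse of a
symmetric matrix has the same image as the matrix, which closes the cycle
`Im Σ = Im Σ⁺ ⊆ Im Ψ⁺ = Im Ψ ⊆ Im Σ`. Finally `Im A^{1/2} = Im A` because `rank (S * S) = rank S`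
for symmetric `S`.
-/

open Matrix

/-- `B` is the Moore–Penrose pseudoinverse of `A`. -/
def IsMoorePenroseInv {n : ℕ} (A B : Matrix (Fin n) (Fin n) ℝ) : Prop :=
  A * B * A = A ∧ B * A * B = B ∧ (A * B)ᵀ = A * B ∧ (B * A)ᵀ = B * A

/-- The positive semidefinite square root of a positive semidefinite matrix -/
noncomputable def Matrix.PosSemidef.sqrt {n : Type*} [Fintype n] [DecidableEq n]
    {A : Matrix n n ℝ} (hA : A.PosSemidef) : Matrix n n ℝ :=
  (hA.1.eigenvectorUnitary : Matrix n n ℝ) * diagonal (Real.sqrt ∘ hA.1.eigenvalues) *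
    (star hA.1.eigenvectorUnitary : Matrix n n ℝ)

open scoped ComplexOrder

namespace Matrix

variable {ι R 𝕜 : Type*} [Fintype ι]

theorem range_mulVecLin_mul_le [CommSemiring R] (M N : Matrix ι ι R) :
    LinearMap.range (M * N).mulVecLin ≤ LinearMap.range M.mulVecLin := by
  rw [mulVecLin_mul]
  exact LinearMap.range_comp_le_range _ _

theorem mul_mul_eq_of_ker_le [CommRing R] {A B G : Matrix ι ι R}
    (hker : LinearMap.ker A.mulVecLin ≤ LinearMap.ker B.mulVecLin) (hG : A * G * A = A) :
    B * G * A = B := by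
  refine (ext_iff_mulVec.mpr fun x => ?_).symm
  have hx : x - (G * A) *ᵥ x ∈ LinearMap.ker A.mulVecLin := by
    simp [mulVec_sub, mulVec_mulVec, ← Matrix.mul_assoc, hG]
  have := hker hx
  simp only [LinearMap.mem_ker, mulVecLin_apply, mulVec_sub, sub_eq_zero] at this
  rw [this, mulVec_mulVec, Matrix.mul_assoc]

/-- The generalized inverse `G` of `A` provides the factorization `B = A * (Gᴴ * B)`. -/
theorem IsHermitian.range_le_of_ker_le [CommRing R] [StarRing R] {A B G : Matrix ι ι R}
    (hA : A.IsHermitian) (hB : B.IsHermitian)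
    (hker : LinearMap.ker A.mulVecLin ≤ LinearMap.ker B.mulVecLin) (hG : A * G * A = A) :
    LinearMap.range B.mulVecLin ≤ LinearMap.range A.mulVecLin := by
  have hfactor : B = A * (Gᴴ * B) := by
    conv_lhs => rw [← hB, ← mul_mul_eq_of_ker_le hker hG]
    rw [conjTranspose_mul, conjTranspose_mul, hA.eq, hB.eq]
  rw [hfactor]
  exact range_mulVecLin_mul_le _ _

theorem PosSemidef.ker_le_of_posSemidef_sub [RCLike 𝕜] {A B : Matrix ι ι 𝕜}
    (hB : B.PosSemidef) (hAB : (A - B).PosSemidef) :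
    LinearMap.ker A.mulVecLin ≤ LinearMap.ker B.mulVecLin := by
  intro x hx
  rw [LinearMap.mem_ker, mulVecLin_apply] at hx ⊢
  have hdiff := hAB.dotProduct_mulVec_nonneg x
  rw [sub_mulVec, dotProduct_sub, hx, dotProduct_zero, zero_sub, neg_nonneg] at hdiff
  exact (hB.dotProduct_mulVec_zero_iff x).mp
    (le_antisymm hdiff (hB.dotProduct_mulVec_nonneg x))

theorem PosSemidef.range_le_of_posSemidef_sub [RCLike 𝕜] {A B G : Matrix ι ι 𝕜}
    (hB : B.PosSemidef) (hAB : (A - B).PosSemidef) (hG : A * G * A = A) :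
    LinearMap.range B.mulVecLin ≤ LinearMap.range A.mulVecLin := by
  have hA : A.IsHermitian := by simpa using hAB.isHermitian.add hB.isHermitian
  exact hA.range_le_of_ker_le hB.isHermitian (hB.ker_le_of_posSemidef_sub hAB) hG

theorem IsHermitian.range_mulVecLin_mul_self [RCLike 𝕜] {S : Matrix ι ι 𝕜}
    (hS : S.IsHermitian) :
    LinearMap.range (S * S).mulVecLin = LinearMap.range S.mulVecLin := by
  refine Submodule.eq_of_le_of_finrank_le (range_mulVecLin_mul_le S S) ?_
  have := rank_conjTranspose_mul_self S
  rw [hS.eq] at this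
  exact this.ge

end Matrix

namespace Matrix.PosSemidef

variable {ι : Type*} [Fintype ι] [DecidableEq ι] {A : Matrix ι ι ℝ}

theorem sqrt_mul_self (hA : A.PosSemidef) : hA.sqrt * hA.sqrt = A := by
  set U : Matrix ι ι ℝ := ↑hA.1.eigenvectorUnitary
  set D := diagonal (Real.sqrt ∘ hA.1.eigenvalues)
  have hU : star U * U = 1 := Unitary.coe_star_mul_self _
  have hD : D * D = diagonal hA.1.eigenvalues := by
    rw [diagonal_mul_diagonal]
    exact congrArg diagonal (funext fun i => Real.mul_self_sqrt (hA.eigenvalues_nonneg i))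
  calc hA.sqrt * hA.sqrt = U * (D * (star U * U) * D) * star U := by
        simp only [sqrt, Matrix.mul_assoc, U, D]
    _ = A := by
      rw [hU, Matrix.mul_one, hD]
      simpa [Unitary.conjStarAlgAut_apply] using hA.1.spectral_theorem.symm

theorem posSemidef_sqrt (hA : A.PosSemidef) : hA.sqrt.PosSemidef := by
  have hD : (diagonal (Real.sqrt ∘ hA.1.eigenvalues)).PosSemidef :=
    posSemidef_diagonal_iff.mpr fun i => Real.sqrt_nonneg _
  have := hD.mul_mul_conjTranspose_same (hA.1.eigenvectorUnitary : Matrix ι ι ℝ)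
  unfold Matrix.PosSemidef.sqrt
  rwa [← star_eq_conjTranspose, ← Unitary.coe_star] at this

theorem range_sqrt_mulVecLin (hA : A.PosSemidef) :
    LinearMap.range hA.sqrt.mulVecLin = LinearMap.range A.mulVecLin := by
  conv_rhs => rw [← hA.sqrt_mul_self]
  exact hA.posSemidef_sqrt.isHermitian.range_mulVecLin_mul_self.symm

end Matrix.PosSemidef

namespace IsMoorePenroseInv

variable {n : ℕ} {A B C : Matrix (Fin n) (Fin n) ℝ}

theorem symm (h : IsMoorePenroseInv A B) : IsMoorePenroseInv B A :=
  ⟨h.2.1, h.1, h.2.2.2, h.2.2.1⟩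

theorem transpose (h : IsMoorePenroseInv A B) : IsMoorePenroseInv Aᵀ Bᵀ := by
  obtain ⟨h₁, h₂, h₃, h₄⟩ := h
  refine ⟨?_, ?_, ?_, ?_⟩
  · rw [← transpose_mul, ← transpose_mul, ← Matrix.mul_assoc, h₁]
  · rw [← transpose_mul, ← transpose_mul, ← Matrix.mul_assoc, h₂]
  · rw [← transpose_mul, transpose_transpose, h₄]
  · rw [← transpose_mul, transpose_transpose, h₃]

theorem unique (hB : IsMoorePenroseInv A B) (hC : IsMoorePenroseInv A C) : B = C := by
  obtain ⟨hB₁, hB₂, hB₃, hB₄⟩ := hB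
  obtain ⟨hC₁, hC₂, hC₃, hC₄⟩ := hC
  have hAB : A * B = A * C := by
    calc A * B = (A * C * A * B)ᵀ := by rw [hC₁, hB₃]
      _ = A * B * (A * C) := by rw [Matrix.mul_assoc (A * C), transpose_mul, hB₃, hC₃]
      _ = A * C := by rw [← Matrix.mul_assoc, hB₁]
  have hBA : B * A = C * A := by
    calc B * A = (B * (A * C * A))ᵀ := by rw [hC₁, hB₄]
      _ = C * A * (B * A) := by
        rw [Matrix.mul_assoc A C A, ← Matrix.mul_assoc B A, transpose_mul, hB₄, hC₄]
      _ = C * A := by rw [Matrix.mul_assoc, ← Matrix.mul_assoc A, hB₁]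
  calc B = B * A * B := hB₂.symm
    _ = C := by rw [Matrix.mul_assoc, hAB, ← Matrix.mul_assoc, hBA, hC₂]

theorem isSymm (hA : A.IsSymm) (h : IsMoorePenroseInv A B) : B.IsSymm := by
  have := h.transpose
  rw [hA.eq] at this
  exact this.unique h

theorem posSemidef (hA : A.PosSemidef) (h : IsMoorePenroseInv A B) : B.PosSemidef := by
  have hB : Bᴴ = B := (h.isSymm (isHermitian_iff_isSymm.mp hA.1)).eq
  have := hA.conjTranspose_mul_mul_same B
  rwa [hB, h.2.1] at this

theorem range_le (hA : A.IsSymm) (h : IsMoorePenroseInv A B) :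
    LinearMap.range A.mulVecLin ≤ LinearMap.range B.mulVecLin := by
  have hcomm : A * B = B * A := by
    rw [← h.2.2.1, transpose_mul, hA.eq, (h.isSymm hA).eq]
  have hfactor : A = B * (A * A) := by
    conv_lhs => rw [← h.1, hcomm]
    rw [Matrix.mul_assoc]
  rw [hfactor]
  exact range_mulVecLin_mul_le _ _

theorem range_eq (hA : A.IsSymm) (h : IsMoorePenroseInv A B) :
    LinearMap.range B.mulVecLin = LinearMap.range A.mulVecLin :=
  le_antisymm (h.symm.range_le (h.isSymm hA)) (h.range_le hA)

end IsMoorePenroseInv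

/-- If `Σ ⪰ Ψ ⪰ 0` and `Ψ⁺ ⪰ Σ⁺`, then `Im(Σ^{1/2}) = Im(Ψ^{1/2})`. -/
theorem stmt_1 {n : ℕ} (Sig Psi Sigp Psip : Matrix (Fin n) (Fin n) ℝ)
    (hSig : Sig.PosSemidef) (hPsi : Psi.PosSemidef)
    (hSigp : IsMoorePenroseInv Sig Sigp) (hPsip : IsMoorePenroseInv Psi Psip)
    (hge : (Sig - Psi).PosSemidef) (hgep : (Psip - Sigp).PosSemidef) :
    LinearMap.range (hSig.sqrt.mulVecLin) = LinearMap.range (hPsi.sqrt.mulVecLin) := by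
  rw [hSig.range_sqrt_mulVecLin, hPsi.range_sqrt_mulVecLin]
  refine le_antisymm ?_ (hPsi.range_le_of_posSemidef_sub hge hSigp.1)
  calc LinearMap.range Sig.mulVecLin
      = LinearMap.range Sigp.mulVecLin := (hSigp.range_eq (isHermitian_iff_isSymm.mp hSig.1)).symm
    _ ≤ LinearMap.range Psip.mulVecLin :=
      (hSigp.posSemidef hSig).range_le_of_posSemidef_sub hgep hPsip.symm.1
    _ = LinearMap.range Psi.mulVecLin := hPsip.range_eq (isHermitian_iff_isSymm.mp hPsi.1)
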